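/- For all t > 0, the error-function-type probability P(t) = (1/√(2π))∫_{-t}^t e^{-x²/2}dx satisfies the two-sided bound of Shenton: 1 - 4√(2/π)·e^{-t²/2}/(3t + √(t²+8)) < P(t) < 1 - (1/√(2π))(√(t²+4) - t)e^{-t²/2} — and moreover the geometric lower bound √(1 - e^{-t²/2}) exceeds the Shenton lower bound for all sufficiently small t > 0. -/

import Mathlib

open Real MeasureTheory

noncomputable def P (t : ℝ) : ℝ := (1 / Real.sqrt (2 * π)) * ∫ x in (-t)..t, Real.exp (-x ^ 2 / 2)

/-- Shenton's lower bound for P(t). -/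
noncomputable def shentonLower (t : ℝ) : ℝ :=
  1 - 4 * Real.sqrt (2 / π) * Real.exp (-t ^ 2 / 2) / (3 * t + Real.sqrt (t ^ 2 + 8))

/-- Shenton's upper bound for P(t). -/
noncomputable def shentonUpper (t : ℝ) : ℝ :=
  1 - (1 / Real.sqrt (2 * π)) * (Real.sqrt (t ^ 2 + 4) - t) * Real.exp (-t ^ 2 / 2)

/-!
Since `P t = 1 - (2 / √(2π)) ∫_t^∞ e^{-x²/2} dx`, both Shenton bounds are bounds
`e^{-t²/2} m(t) < ∫_t^∞ e^{-x²/2} dx < e^{-t²/2} M(t)` on the Gaussian tail, with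
`m(t) = (√(t² + 4) - t) / 2` and `M(t) = 4 / (3t + √(t² + 8))`. For bounded `g`, the difference
`∫_t^∞ e^{-x²/2} dx - e^{-t²/2} g(t)` tends to `0` at infinity and has derivative
`e^{-t²/2} (t g(t) - g'(t) - 1)`, so its sign at `t` is decided by the sign of `x g - g' - 1` on
`(t, ∞)`. For `m` and `M` that sign condition reduces to `x³ + 3x < (x² + 1) √(x² + 4)` and
`x³ + 6x < (x² + 2) √(x² + 8)`, whose squared forms differ by `4` and `32`.

Shenton's lower bound is continuous at `0` with value `1 - 2 / √π < 0`, so near `0` it lies below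
every nonnegative quantity, in particular below `√(1 - e^{-t²/2})`.
-/

open Filter Set Topology

noncomputable def gaussTail (t : ℝ) : ℝ := ∫ x in Ioi t, exp (-x ^ 2 / 2)

lemma integrableOn_exp_neg_sq_div_two_Ioi (t : ℝ) :
    IntegrableOn (fun x : ℝ => exp (-x ^ 2 / 2)) (Ioi t) := by
  simpa [neg_div, div_eq_inv_mul] using
    (integrable_exp_neg_mul_sq (by norm_num : (0 : ℝ) < 1 / 2)).integrableOn

lemma gaussTail_zero : gaussTail 0 = √(2 * π) / 2 := by
  rw [gaussTail]
  convert integral_gaussian_Ioi (1 / 2) using 1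
  · ring_nf
  · norm_num
    ring

lemma gaussTail_sub_gaussTail (a b : ℝ) :
    gaussTail a - gaussTail b = ∫ x in a..b, exp (-x ^ 2 / 2) :=
  intervalIntegral.integral_Ioi_sub_Ioi' (integrableOn_exp_neg_sq_div_two_Ioi a)
    (integrableOn_exp_neg_sq_div_two_Ioi b)

lemma hasDerivAt_gaussTail (t : ℝ) : HasDerivAt gaussTail (-exp (-t ^ 2 / 2)) t := by
  have hc : Continuous fun x : ℝ => exp (-x ^ 2 / 2) := by fun_prop
  have h := (intervalIntegral.integral_hasDerivAt_right (hc.intervalIntegrable 0 t)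
    (hc.stronglyMeasurableAtFilter _ _) hc.continuousAt).const_sub (gaussTail 0)
  simpa only [← gaussTail_sub_gaussTail, sub_sub_cancel] using h

lemma tendsto_gaussTail_atTop : Tendsto gaussTail atTop (𝓝 0) := by
  have h := (intervalIntegral_tendsto_integral_Ioi 0 (integrableOn_exp_neg_sq_div_two_Ioi 0)
    tendsto_id).const_sub (gaussTail 0)
  rw [← gaussTail, sub_self] at h
  simpa only [← gaussTail_sub_gaussTail, sub_sub_cancel, id] using h

lemma P_eq_one_sub_gaussTail (t : ℝ) : P t = 1 - 2 / √(2 * π) * gaussTail t := by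
  have hc : Continuous fun x : ℝ => exp (-x ^ 2 / 2) := by fun_prop
  have hsymm : ∫ x in (-t)..0, exp (-x ^ 2 / 2) = ∫ x in 0..t, exp (-x ^ 2 / 2) := by
    have h := intervalIntegral.integral_comp_neg (a := 0) (b := t) fun x => exp (-x ^ 2 / 2)
    simp only [neg_zero, neg_sq] at h
    exact h.symm
  have hsplit := intervalIntegral.integral_add_adjacent_intervals (μ := volume)
    (hc.intervalIntegrable (-t) 0) (hc.intervalIntegrable 0 t)
  have hpos : 0 < √(2 * π) := by positivity
  rw [P, ← hsplit, hsymm, ← gaussTail_sub_gaussTail, gaussTail_zero]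
  field_simp
  ring

lemma pos_of_hasDerivAt_neg_of_tendsto_zero {f f' : ℝ → ℝ} {t : ℝ}
    (hf : ∀ x ≥ t, HasDerivAt f (f' x) x) (hf' : ∀ x > t, f' x < 0)
    (hlim : Tendsto f atTop (𝓝 0)) : 0 < f t := by
  have hanti : StrictAntiOn f (Ici t) := by
    refine strictAntiOn_of_hasDerivWithinAt_neg (f' := f') (convex_Ici t)
      (fun x hx => (hf x hx).continuousAt.continuousWithinAt) (fun x hx => ?_) (fun x hx => ?_)
    all_goals rw [interior_Ici] at hx
    exacts [(hf x (le_of_lt hx)).hasDerivWithinAt, hf' x hx]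
  have hnonneg : 0 ≤ f (t + 1) := by
    refine le_of_tendsto hlim ?_
    filter_upwards [eventually_ge_atTop (t + 1)] with x hx
    exact hanti.antitoneOn (mem_Ici.2 (by linarith)) (mem_Ici.2 (by linarith)) hx
  exact hnonneg.trans_lt (hanti self_mem_Ici (mem_Ici.2 (by linarith)) (by linarith))

lemma hasDerivAt_gaussTail_sub_mul {g : ℝ → ℝ} {g' x : ℝ} (hg : HasDerivAt g g' x) :
    HasDerivAt (fun y => gaussTail y - exp (-y ^ 2 / 2) * g y)
      (exp (-x ^ 2 / 2) * (x * g x - g' - 1)) x := by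
  have hq : HasDerivAt (fun y : ℝ => -y ^ 2 / 2) (-x) x :=
    ((hasDerivAt_pow 2 x).neg.div_const 2).congr_deriv (by ring)
  exact ((hasDerivAt_gaussTail x).sub (hq.exp.mul hg)).congr_deriv (by ring)

lemma tendsto_gaussTail_sub_mul {g : ℝ → ℝ} {C : ℝ} (hg : ∀ᶠ y in atTop, |g y| ≤ C) :
    Tendsto (fun y => gaussTail y - exp (-y ^ 2 / 2) * g y) atTop (𝓝 0) := by
  have hexp : Tendsto (fun y : ℝ => exp (-y ^ 2 / 2)) atTop (𝓝 0) :=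
    tendsto_exp_atBot.comp <| (tendsto_neg_atTop_atBot.comp
      (tendsto_pow_atTop two_ne_zero)).atBot_div_const two_pos
  simpa using tendsto_gaussTail_atTop.sub (hexp.zero_mul_isBoundedUnder_le ⟨C, hg⟩)

lemma exp_mul_lt_gaussTail {g g' : ℝ → ℝ} {t C : ℝ} (hg : ∀ x ≥ t, HasDerivAt g (g' x) x)
    (hbdd : ∀ᶠ y in atTop, |g y| ≤ C) (hsign : ∀ x > t, x * g x - g' x - 1 < 0) :
    exp (-t ^ 2 / 2) * g t < gaussTail t := by
  have := pos_of_hasDerivAt_neg_of_tendsto_zero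
    (fun x hx => hasDerivAt_gaussTail_sub_mul (hg x hx))
    (fun x hx => mul_neg_of_pos_of_neg (exp_pos _) (hsign x hx)) (tendsto_gaussTail_sub_mul hbdd)
  linarith

lemma gaussTail_lt_exp_mul {g g' : ℝ → ℝ} {t C : ℝ} (hg : ∀ x ≥ t, HasDerivAt g (g' x) x)
    (hbdd : ∀ᶠ y in atTop, |g y| ≤ C) (hsign : ∀ x > t, 0 < x * g x - g' x - 1) :
    gaussTail t < exp (-t ^ 2 / 2) * g t := by
  have := pos_of_hasDerivAt_neg_of_tendsto_zero
    (f := fun y => -(gaussTail y - exp (-y ^ 2 / 2) * g y))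
    (fun x hx => (hasDerivAt_gaussTail_sub_mul (hg x hx)).neg)
    (fun x hx => neg_neg_of_pos (mul_pos (exp_pos _) (hsign x hx)))
    (by simpa only [neg_zero] using (tendsto_gaussTail_sub_mul hbdd).neg)
  linarith

lemma lt_mul_sqrt_of_sq_lt {a b c : ℝ} (hb : 0 ≤ b) (h : a ^ 2 < b ^ 2 * c) : a < b * √c := by
  rw [← Real.sqrt_sq hb, ← Real.sqrt_mul (sq_nonneg b)]
  exact Real.lt_sqrt_of_sq_lt h

lemma hasDerivAt_sqrt_sq_add {c : ℝ} (hc : 0 < c) (x : ℝ) :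
    HasDerivAt (fun y => √(y ^ 2 + c)) (x / √(x ^ 2 + c)) x := by
  have hpos : 0 < x ^ 2 + c := by positivity
  refine (((hasDerivAt_pow 2 x).add_const c).sqrt hpos.ne').congr_deriv ?_
  field_simp
  ring

-- Birnbaum's lower and Sampford's upper bound for Mills' ratio `e^{t²/2} ∫_t^∞ e^{-x²/2} dx`.
noncomputable def millsLower (t : ℝ) : ℝ := (√(t ^ 2 + 4) - t) / 2

noncomputable def millsUpper (t : ℝ) : ℝ := 4 / (3 * t + √(t ^ 2 + 8))

lemma hasDerivAt_millsLower (x : ℝ) :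
    HasDerivAt millsLower (-millsLower x / √(x ^ 2 + 4)) x := by
  have hs : 0 < √(x ^ 2 + 4) := by positivity
  refine (((hasDerivAt_sqrt_sq_add (by norm_num) x).sub (hasDerivAt_id x)).div_const 2).congr_deriv
    ?_
  rw [millsLower]
  field_simp
  ring

lemma abs_millsLower_le_one {x : ℝ} (hx : 0 ≤ x) : |millsLower x| ≤ 1 := by
  have hlow : |x| ≤ √(x ^ 2 + 4) := Real.abs_le_sqrt (by linarith)
  have hup : √(x ^ 2 + 4) ≤ x + 2 := Real.sqrt_le_iff.2 ⟨by linarith, by nlinarith⟩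
  rw [millsLower, abs_le]
  constructor <;> linarith [le_abs_self x]

lemma mul_millsLower_add_millsLower_div_lt_one (x : ℝ) :
    x * millsLower x + millsLower x / √(x ^ 2 + 4) < 1 := by
  set s := √(x ^ 2 + 4)
  have hs : 0 < s := by positivity
  have hsq : s ^ 2 = x ^ 2 + 4 := Real.sq_sqrt (by positivity)
  have key : x ^ 3 + 3 * x < (x ^ 2 + 1) * s := lt_mul_sqrt_of_sq_lt (by positivity) (by nlinarith)
  have hgap : 1 - (x * millsLower x + millsLower x / s) =
      ((x ^ 2 + 1) * s - (x ^ 3 + 3 * x)) / (2 * s) := by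
    rw [millsLower]
    field_simp
    linear_combination (-x) * hsq
  rw [← sub_pos, hgap]
  exact div_pos (by linarith) (by positivity)

lemma three_mul_add_sqrt_pos {x : ℝ} (hx : -1 < x) : 0 < 3 * x + √(x ^ 2 + 8) := by
  rcases le_or_gt 0 x with hx0 | hx0
  · positivity
  · linarith [Real.lt_sqrt_of_sq_lt (show (-3 * x) ^ 2 < x ^ 2 + 8 by nlinarith)]

lemma hasDerivAt_millsUpper {x : ℝ} (hx : -1 < x) :
    HasDerivAt millsUpper (-4 * (3 + x / √(x ^ 2 + 8)) / (3 * x + √(x ^ 2 + 8)) ^ 2) x := by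
  have hden : HasDerivAt (fun y => 3 * y + √(y ^ 2 + 8)) (3 + x / √(x ^ 2 + 8)) x :=
    ((hasDerivAt_id x).const_mul 3).add (hasDerivAt_sqrt_sq_add (by norm_num) x) |>.congr_deriv
      (by simp)
  exact ((hasDerivAt_const x 4).div hden (three_mul_add_sqrt_pos hx).ne').congr_deriv (by ring)

lemma abs_millsUpper_le_two {x : ℝ} (hx : 0 ≤ x) : |millsUpper x| ≤ 2 := by
  have hr : 2 ≤ √(x ^ 2 + 8) := Real.le_sqrt_of_sq_le (by nlinarith)
  rw [millsUpper, abs_of_nonneg (by positivity), div_le_iff₀ (by positivity)]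
  linarith

lemma one_lt_mul_millsUpper_add {x : ℝ} (hx : -1 < x) :
    1 < x * millsUpper x + 4 * (3 + x / √(x ^ 2 + 8)) / (3 * x + √(x ^ 2 + 8)) ^ 2 := by
  have hD := three_mul_add_sqrt_pos hx
  rw [millsUpper]
  set r := √(x ^ 2 + 8)
  have hr : 0 < r := by positivity
  have hsq : r ^ 2 = x ^ 2 + 8 := Real.sq_sqrt (by positivity)
  have key : x ^ 3 + 6 * x < (x ^ 2 + 2) * r := lt_mul_sqrt_of_sq_lt (by positivity) (by nlinarith)
  have hgap : x * (4 / (3 * x + r)) + 4 * (3 + x / r) / (3 * x + r) ^ 2 - 1 =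
      2 * ((x ^ 2 + 2) * r - (x ^ 3 + 6 * x)) / (r * (3 * x + r) ^ 2) := by
    generalize hDdef : 3 * x + r = D at hD ⊢
    field_simp
    subst hDdef
    linear_combination (-(2 * x + r)) * hsq
  rw [← sub_pos, hgap]
  exact div_pos (by linarith) (by positivity)

lemma exp_mul_millsLower_lt_gaussTail (t : ℝ) : exp (-t ^ 2 / 2) * millsLower t < gaussTail t :=
  exp_mul_lt_gaussTail (fun x _ => hasDerivAt_millsLower x)
    ((eventually_ge_atTop 0).mono fun _ => abs_millsLower_le_one)
    (fun x _ => by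
      rw [neg_div, sub_neg_eq_add, sub_neg]
      exact mul_millsLower_add_millsLower_div_lt_one x)

lemma gaussTail_lt_exp_mul_millsUpper {t : ℝ} (ht : -1 < t) :
    gaussTail t < exp (-t ^ 2 / 2) * millsUpper t :=
  gaussTail_lt_exp_mul (fun x hx => hasDerivAt_millsUpper (ht.trans_le hx))
    ((eventually_ge_atTop 0).mono fun _ => abs_millsUpper_le_two)
    (fun x hx => by
      rw [neg_mul, neg_div, sub_neg_eq_add, sub_pos]
      exact one_lt_mul_millsUpper_add (ht.trans hx))

lemma shentonLower_eq (t : ℝ) :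
    shentonLower t = 1 - 2 / √(2 * π) * (exp (-t ^ 2 / 2) * millsUpper t) := by
  have hsqrt : √(2 / π) = 2 / √(2 * π) := by
    rw [show (2 : ℝ) / π = 2 ^ 2 / (2 * π) by field_simp, Real.sqrt_div (by norm_num),
      Real.sqrt_sq (by norm_num)]
  rw [shentonLower, millsUpper, hsqrt]
  ring

lemma shentonUpper_eq (t : ℝ) :
    shentonUpper t = 1 - 2 / √(2 * π) * (exp (-t ^ 2 / 2) * millsLower t) := by
  rw [shentonUpper, millsLower]
  ring

lemma shentonLower_lt_P {t : ℝ} (ht : -1 < t) : shentonLower t < P t := by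
  rw [shentonLower_eq, P_eq_one_sub_gaussTail]
  gcongr
  exact gaussTail_lt_exp_mul_millsUpper ht

lemma P_lt_shentonUpper (t : ℝ) : P t < shentonUpper t := by
  rw [shentonUpper_eq, P_eq_one_sub_gaussTail]
  gcongr
  exact exp_mul_millsLower_lt_gaussTail t

lemma continuousAt_shentonLower {t : ℝ} (ht : -1 < t) : ContinuousAt shentonLower t :=
  continuousAt_const.sub <| ContinuousAt.div (by fun_prop) (by fun_prop)
    (three_mul_add_sqrt_pos ht).ne'

lemma shentonLower_zero_neg : shentonLower 0 < 0 := by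
  have h : √8 < 4 * √(2 / π) := lt_mul_sqrt_of_sq_lt (by norm_num) <| by
    rw [Real.sq_sqrt (by norm_num)]
    field_simp
    linarith [pi_lt_four]
  simp only [shentonLower, ne_eq, OfNat.ofNat_ne_zero, not_false_eq_true, zero_pow, neg_zero,
    zero_div, exp_zero, mul_one, mul_zero, zero_add, sub_neg]
  rwa [one_lt_div (by positivity)]

theorem shenton_bounds_and_comparison :
    (∀ t : ℝ, 0 < t → shentonLower t < P t ∧ P t < shentonUpper t) ∧
    (∃ ε : ℝ, 0 < ε ∧ ∀ t : ℝ, 0 < t → t < ε →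
      shentonLower t < Real.sqrt (1 - Real.exp (-t ^ 2 / 2))) := by
  refine ⟨fun t ht => ⟨shentonLower_lt_P (by linarith), P_lt_shentonUpper t⟩, ?_⟩
  obtain ⟨ε, hε, hneg⟩ := Metric.eventually_nhds_iff.1
    ((continuousAt_shentonLower neg_one_lt_zero).eventually (gt_mem_nhds shentonLower_zero_neg))
  refine ⟨ε, hε, fun t ht htε => (hneg ?_).trans_le (Real.sqrt_nonneg _)⟩
  rwa [Real.dist_eq, sub_zero, abs_of_pos ht]
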